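/- Let X be a real-valued random variable with integrable characteristic function φ ∈ L¹(ℝ). Then the law of X has a continuous density f_X given by the inversion formula f_X(x) = (1/2π) ∫_{-∞}^{∞} e^{-iθx} φ(θ) dθ for all x ∈ ℝ. -/

import Mathlib

/-!
Let `μ` be the law, with characteristic function `φ`. Writing a Schwartz function as
`g = 𝓕⁻ (𝓕 g)` and applying Fubini twice gives
`∫ g dμ = ∫ f g` with `f` the Fourier transform of `ξ ↦ φ (2πξ)`; `f` is real because
`φ (-θ) = conj (φ θ)`. Testing against nonnegative bump functions shows `f ≥ 0` and `∫ f ≤ μ V`,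
so `f dx` is a finite measure, whose characteristic function is `φ` by Fourier inversion.
Characteristic functions determine finite measures, hence `μ = f dx`.
-/

open MeasureTheory Complex FourierTransform Real Filter Set Metric
open scoped Topology ComplexConjugate RealInnerProductSpace SchwartzMap

section FiniteDimensional

variable {V : Type*} [NormedAddCommGroup V] [InnerProductSpace ℝ V] [FiniteDimensional ℝ V]
  [MeasurableSpace V] [BorelSpace V]

/-- With `𝓕` normalized by `𝐞 x = exp (2πix)`, this is `(2π)⁻ᵈ ∫ exp (-i⟪θ, x⟫) φ θ dθ` for the
characteristic function `φ` of `μ` and `d = dim V`. -/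
noncomputable def densityOfCharFun (μ : Measure V) : V → ℂ :=
  𝓕 fun ξ ↦ charFun μ ((2 * π) • ξ)

lemma integral_fourierInv_eq_integral_charFun_mul (μ : Measure V) [IsFiniteMeasure μ]
    {h : V → ℂ} (hh : Integrable h) :
    ∫ x, 𝓕⁻ h x ∂μ = ∫ ξ, charFun μ ((2 * π) • ξ) * h ξ := by
  have hL : Continuous fun p : V × V ↦ (-innerₗ V) p.1 p.2 := by
    simp only [LinearMap.neg_apply, innerₗ_apply_apply]
    exact continuous_inner.neg
  have hswap := VectorFourier.integral_fourierIntegral_smul_eq_flip (μ := μ) (ν := volume)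
    (f := 1) Real.continuous_fourierChar hL (integrable_const 1) hh
  calc ∫ x, 𝓕⁻ h x ∂μ
      = ∫ x, (1 : V → ℂ) x • VectorFourier.fourierIntegral 𝐞 volume (-innerₗ V).flip h x ∂μ := by
        congr with x
        simp [Real.fourierInv_eq, VectorFourier.fourierIntegral, real_inner_comm]
    _ = ∫ ξ, VectorFourier.fourierIntegral 𝐞 μ (-innerₗ V) 1 ξ • h ξ := hswap.symm
    _ = ∫ ξ, charFun μ ((2 * π) • ξ) * h ξ := by
        congr with ξ
        simp only [charFun_apply, VectorFourier.fourierIntegral, inner_smul_right, smul_eq_mul]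
        congr 2 with x
        simp [Real.fourierChar_apply, Circle.smul_def]

lemma integral_eq_integral_densityOfCharFun_mul {μ : Measure V} [IsFiniteMeasure μ]
    (hint : Integrable (charFun μ)) (g : 𝓢(V, ℂ)) :
    ∫ x, g x ∂μ = ∫ x, densityOfCharFun μ x * g x := by
  have hψ : Integrable fun ξ ↦ charFun μ ((2 * π) • ξ) := hint.comp_smul (by positivity)
  have hFg : Integrable (𝓕 ⇑g) := by
    rw [← SchwartzMap.fourier_coe]
    exact (𝓕 g).integrable
  calc ∫ x, g x ∂μ = ∫ x, 𝓕⁻ (𝓕 ⇑g) x ∂μ := by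
        rw [g.continuous.fourierInv_fourier_eq g.integrable hFg]
    _ = ∫ ξ, charFun μ ((2 * π) • ξ) * 𝓕 g ξ :=
        integral_fourierInv_eq_integral_charFun_mul μ hFg
    _ = ∫ x, densityOfCharFun μ x * g x := by
        simpa [real_inner_comm] using! (VectorFourier.integral_fourierIntegral_smul_eq_flip
          (L := innerₗ V) Real.continuous_fourierChar continuous_inner hψ g.integrable).symm

lemma continuous_densityOfCharFun {μ : Measure V} (hint : Integrable (charFun μ)) :
    Continuous (densityOfCharFun μ) :=
  VectorFourier.fourierIntegral_continuous Real.continuous_fourierChar continuous_inner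
    (hint.comp_smul (by positivity))

lemma continuous_re_densityOfCharFun {μ : Measure V} (hint : Integrable (charFun μ)) :
    Continuous fun x ↦ (densityOfCharFun μ x).re :=
  continuous_re.comp (continuous_densityOfCharFun hint)

lemma conj_densityOfCharFun (μ : Measure V) (x : V) :
    conj (densityOfCharFun μ x) = densityOfCharFun μ x := by
  have h : conj (densityOfCharFun μ x) = 𝓕⁻ (fun ξ ↦ charFun μ ((2 * π) • -ξ)) x := by
    simp only [densityOfCharFun, Real.fourier_eq, Real.fourierInv_eq, ← integral_conj]
    congr with ξ
    simp [Circle.smul_def]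
  rw [h, Real.fourierInv_eq_fourier_comp_neg]
  simp only [neg_neg, densityOfCharFun]

lemma ofReal_re_densityOfCharFun (μ : Measure V) (x : V) :
    ((densityOfCharFun μ x).re : ℂ) = densityOfCharFun μ x :=
  conj_eq_iff_re.mp (conj_densityOfCharFun μ x)

lemma integral_bump_mul_re_densityOfCharFun {μ : Measure V} [IsFiniteMeasure μ]
    (hint : Integrable (charFun μ)) {c : V} (u : ContDiffBump c) :
    ∫ x, u x * (densityOfCharFun μ x).re = ∫ x, u x ∂μ := by
  have hu : HasCompactSupport fun x ↦ (u x : ℂ) := u.hasCompactSupport.comp_left ofReal_zero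
  have key : ∫ x, (u x : ℂ) ∂μ = ∫ x, densityOfCharFun μ x * u x :=
    integral_eq_integral_densityOfCharFun_mul hint
    (hu.toSchwartzMap (ofRealCLM.contDiff.comp u.contDiff))
  have hmul : ∀ x, densityOfCharFun μ x * u x = ((u x * (densityOfCharFun μ x).re : ℝ) : ℂ) := by
    intro x
    rw [ofReal_mul, ofReal_re_densityOfCharFun, mul_comm]
  simp only [hmul] at key
  exact_mod_cast key.symm

section TestAgainstBumps

variable {μ : Measure V} [IsFiniteMeasureOnCompacts μ] {f : V → ℝ}

lemma nonneg_of_forall_integral_bump_mul_nonneg [μ.IsOpenPosMeasure] (hf : Continuous f)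
    (h : ∀ (c : V) (u : ContDiffBump c), 0 ≤ ∫ x, u x * f x ∂μ) : 0 ≤ f := by
  intro x₀
  show 0 ≤ f x₀
  by_contra! hneg
  obtain ⟨ε, hε, hball⟩ :=
    Metric.eventually_nhds_iff.mp ((hf.tendsto x₀).eventually (Iio_mem_nhds hneg))
  let u : ContDiffBump x₀ := ⟨ε / 2, ε, by positivity, by linarith⟩
  have hpos : 0 < ∫ x, -(u x * f x) ∂μ := by
    refine (u.continuous.mul hf).neg.integral_pos_of_hasCompactSupport_nonneg_nonzero
      (x := x₀) u.hasCompactSupport.mul_right.neg (fun y ↦ ?_) ?_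
    · by_cases hy : dist y x₀ < ε
      · exact neg_nonneg.mpr (mul_nonpos_of_nonneg_of_nonpos u.nonneg (hball hy).le)
      · simp [u.zero_of_le_dist (not_lt.mp hy)]
    · simp [u.one_of_mem_closedBall (mem_closedBall_self (by positivity)), hneg.ne]
  rw [integral_neg] at hpos
  linarith [h x₀ u]

lemma integrable_of_forall_integral_bump_mul_le (hf : Continuous f) (hf₀ : 0 ≤ f) {C : ℝ}
    (h : ∀ u : ContDiffBump (0 : V), ∫ x, u x * f x ∂μ ≤ C) : Integrable f μ := by
  let u : ℕ → ContDiffBump (0 : V) := fun n ↦ ⟨n + 1, n + 2, by positivity, by linarith⟩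
  have hlim (x : V) : Tendsto (fun n ↦ ENNReal.ofReal (u n x * f x)) atTop
      (𝓝 (ENNReal.ofReal (f x))) := by
    refine tendsto_const_nhds.congr' ?_
    filter_upwards [eventually_ge_atTop ⌈‖x‖⌉₊] with n hn
    rw [(u n).one_of_mem_closedBall, one_mul]
    rw [mem_closedBall, dist_zero_right]
    have := (Nat.le_ceil ‖x‖).trans (Nat.cast_le.mpr hn)
    show ‖x‖ ≤ n + 1
    linarith
  refine ⟨hf.aestronglyMeasurable, (hasFiniteIntegral_iff_ofReal (ae_of_all _ hf₀)).2 ?_⟩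
  calc ∫⁻ x, ENNReal.ofReal (f x) ∂μ
      = ∫⁻ x, liminf (fun n ↦ ENNReal.ofReal (u n x * f x)) atTop ∂μ := by
        congr with x
        exact (hlim x).liminf_eq.symm
    _ ≤ liminf (fun n ↦ ∫⁻ x, ENNReal.ofReal (u n x * f x) ∂μ) atTop :=
        lintegral_liminf_le fun n ↦
          ENNReal.measurable_ofReal.comp ((u n).continuous.mul hf).measurable
    _ ≤ ENNReal.ofReal C := by
        refine liminf_le_of_frequently_le' (Frequently.of_forall fun n ↦ ?_)
        have hint : Integrable (fun x ↦ u n x * f x) μ :=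
          ((u n).continuous.mul hf).integrable_of_hasCompactSupport
            (u n).hasCompactSupport.mul_right
        rw [← ofReal_integral_eq_lintegral_ofReal hint
          (ae_of_all _ fun x ↦ mul_nonneg (u n).nonneg (hf₀ x))]
        exact ENNReal.ofReal_le_ofReal (h (u n))
    _ < ⊤ := ENNReal.ofReal_lt_top

end TestAgainstBumps

section Inversion

variable {μ : Measure V} [IsFiniteMeasure μ]

lemma re_densityOfCharFun_nonneg (hint : Integrable (charFun μ)) (x : V) :
    0 ≤ (densityOfCharFun μ x).re := by
  refine nonneg_of_forall_integral_bump_mul_nonneg (μ := volume)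
    (continuous_re_densityOfCharFun hint) (fun c u ↦ ?_) x
  rw [integral_bump_mul_re_densityOfCharFun hint u]
  exact integral_nonneg fun x ↦ u.nonneg

lemma integrable_densityOfCharFun (hint : Integrable (charFun μ)) :
    Integrable (densityOfCharFun μ) := by
  have hre : Integrable fun x ↦ (densityOfCharFun μ x).re := by
    refine integrable_of_forall_integral_bump_mul_le (μ := volume) (C := μ.real univ)
      (continuous_re_densityOfCharFun hint) (re_densityOfCharFun_nonneg hint) fun u ↦ ?_
    rw [integral_bump_mul_re_densityOfCharFun hint u]
    refine (le_abs_self _).trans ?_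
    simpa using norm_integral_le_of_norm_le_const (μ := μ) (f := fun x ↦ u x) (C := 1)
      (ae_of_all _ fun x ↦ by simpa [abs_of_nonneg u.nonneg] using u.le_one)
  exact (hre.ofReal (𝕜 := ℂ)).congr (ae_of_all _ fun x ↦ ofReal_re_densityOfCharFun μ x)

lemma charFun_withDensity_re_densityOfCharFun (hint : Integrable (charFun μ)) :
    charFun (volume.withDensity fun x ↦ ENNReal.ofReal (densityOfCharFun μ x).re) = charFun μ := by
  have hψ : Integrable fun ξ ↦ charFun μ ((2 * π) • ξ) := hint.comp_smul (by positivity)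
  have hinv : 𝓕⁻ (densityOfCharFun μ) = fun ξ ↦ charFun μ ((2 * π) • ξ) :=
    Continuous.fourierInv_fourier_eq (continuous_charFun.comp (continuous_const_smul (2 * π))) hψ
      (integrable_densityOfCharFun hint)
  ext t
  obtain ⟨w, rfl⟩ : ∃ w, t = (2 * π) • w :=
    ⟨(2 * π)⁻¹ • t, by rw [smul_smul, mul_inv_cancel₀ (by positivity), one_smul]⟩
  rw [charFun_apply, integral_withDensity_eq_integral_toReal_smul
    (f := fun x ↦ ENNReal.ofReal (densityOfCharFun μ x).re)
    (ENNReal.measurable_ofReal.comp (continuous_re_densityOfCharFun hint).measurable)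
    (ae_of_all _ fun _ ↦ ENNReal.ofReal_lt_top)]
  rw [← congrFun hinv w, Real.fourierInv_eq]
  congr with x
  rw [ENNReal.toReal_ofReal (re_densityOfCharFun_nonneg hint x), real_smul,
    ofReal_re_densityOfCharFun, Circle.smul_def, Real.fourierChar_apply, smul_eq_mul,
    inner_smul_right, mul_comm]

theorem eq_withDensity_re_densityOfCharFun (hint : Integrable (charFun μ)) :
    μ = volume.withDensity fun x ↦ ENNReal.ofReal (densityOfCharFun μ x).re := by
  have := isFiniteMeasure_withDensity_ofReal (integrable_densityOfCharFun hint).re.2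
  exact Measure.ext_of_charFun (charFun_withDensity_re_densityOfCharFun hint).symm

end Inversion

end FiniteDimensional

lemma densityOfCharFun_eq_integral (μ : Measure ℝ) (x : ℝ) :
    densityOfCharFun μ x = 1 / (2 * π) * ∫ θ : ℝ, cexp (-(I * θ * x)) * charFun μ θ := by
  have h := Measure.integral_comp_mul_left (fun θ : ℝ ↦ cexp (-(I * θ * x)) * charFun μ θ) (2 * π)
  rw [densityOfCharFun, Real.fourier_real_eq_integral_exp_smul]
  simp only [smul_eq_mul] at h ⊢
  rw [abs_of_pos (by positivity), real_smul] at h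
  calc ∫ v : ℝ, cexp (↑(-2 * π * v * x) * I) * charFun μ (2 * π * v)
      = ∫ v : ℝ, cexp (-(I * ↑(2 * π * v) * x)) * charFun μ (2 * π * v) := by
        congr with v
        push_cast
        ring_nf
    _ = 1 / (2 * π) * ∫ θ : ℝ, cexp (-(I * θ * x)) * charFun μ θ := by
        rw [h]
        push_cast
        ring

theorem stmt1 {Ω : Type*} [MeasurableSpace Ω] (P : Measure Ω) [IsProbabilityMeasure P]
    (X : Ω → ℝ) (hX : Measurable X)
    (φ : ℝ → ℂ) (hφdef : ∀ θ : ℝ, φ θ = ∫ ω, Complex.exp (Complex.I * θ * X ω) ∂P)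
    (hint : Integrable φ) :
    ∃ f : ℝ → ℝ, Continuous f ∧ (∀ x, 0 ≤ f x) ∧
      Measure.map X P = volume.withDensity (fun x => ENNReal.ofReal (f x)) ∧
      ∀ x : ℝ, (f x : ℂ) =
        (1 / (2 * Real.pi)) * ∫ θ : ℝ, Complex.exp (-(Complex.I * θ * x)) * φ θ := by
  have : IsProbabilityMeasure (P.map X) := Measure.isProbabilityMeasure_map hX.aemeasurable
  have hφ : φ = charFun (P.map X) := by
    ext θ
    rw [hφdef, charFun_apply_real, integral_map hX.aemeasurable (by fun_prop)]
    simp only [mul_comm I, mul_right_comm]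
  subst hφ
  exact ⟨fun x ↦ (densityOfCharFun (P.map X) x).re, continuous_re_densityOfCharFun hint,
    re_densityOfCharFun_nonneg hint, eq_withDensity_re_densityOfCharFun hint,
    fun x ↦ by rw [ofReal_re_densityOfCharFun, densityOfCharFun_eq_integral]⟩
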